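/- arXiv:1807.06938 — 3 statements merged into one kernel-verified Lean document; each statement's English description precedes it below -/
import Mathlib

section
/- For any subset A of ℝ, if K is a compact subset of the Hattori space (ℝ, τ_A), then K ∩ (ℝ\A) is countable. -/
/-!
For `x ∈ K \ A` the ray `[x, ∞)` is open in `τ_A`, so `K ∩ (-∞, x) = K \ [x, ∞)` is compact in
`τ_A`, hence compact and closed in the coarser Euclidean topology. Thus `x` is isolated on the left
in `K`, and a set of reals has only countably many points isolated on the left.
-/

open Set Topology

/-- The Hattori topology on ℝ: points of `A` have Euclidean neighborhood base
`(x-ε, x+ε)`, points outside `A` have Sorgenfrey neighborhood base `[x, x+ε)`. -/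
def hattori (A : Set ℝ) : TopologicalSpace ℝ where
  IsOpen U := ∀ x ∈ U, ∃ ε > (0 : ℝ),
    (x ∈ A → Ioo (x - ε) (x + ε) ⊆ U) ∧ (x ∉ A → Ico x (x + ε) ⊆ U)
  isOpen_univ := fun x _ => ⟨1, one_pos, fun _ => subset_univ _, fun _ => subset_univ _⟩
  isOpen_inter := by
    intro U V hU hV x hx
    obtain ⟨ε₁, hε₁, h₁, h₁'⟩ := hU x hx.1
    obtain ⟨ε₂, hε₂, h₂, h₂'⟩ := hV x hx.2
    have l1 := min_le_left ε₁ ε₂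
    have l2 := min_le_right ε₁ ε₂
    refine ⟨min ε₁ ε₂, lt_min hε₁ hε₂, fun hA => ?_, fun hA => ?_⟩
    · intro y hy
      exact ⟨h₁ hA ⟨by linarith [hy.1], by linarith [hy.2]⟩,
             h₂ hA ⟨by linarith [hy.1], by linarith [hy.2]⟩⟩
    · intro y hy
      exact ⟨h₁' hA ⟨hy.1, by linarith [hy.2]⟩, h₂' hA ⟨hy.1, by linarith [hy.2]⟩⟩
  isOpen_sUnion := by
    intro S hS x hx
    obtain ⟨U, hU, hxU⟩ := hx
    obtain ⟨ε, hε, h, h'⟩ := hS U hU x hxU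
    exact ⟨ε, hε, fun hA => (h hA).trans (subset_sUnion_of_mem hU),
      fun hA => (h' hA).trans (subset_sUnion_of_mem hU)⟩

/-- The Sorgenfrey (lower limit) topology on ℝ. -/
def sorgenfrey : TopologicalSpace ℝ :=
  TopologicalSpace.generateFrom {S | ∃ a b : ℝ, S = Ico a b}

lemma hattori_le_euclidean (A : Set ℝ) : hattori A ≤ (inferInstance : TopologicalSpace ℝ) := by
  intro U hU x hx
  obtain ⟨ε, hε, hball⟩ := Metric.isOpen_iff.mp hU x hx
  rw [Real.ball_eq_Ioo] at hball
  exact ⟨ε, hε, fun _ => hball, fun _ => (Ico_subset_Ioo_left (by linarith)).trans hball⟩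

lemma hattori_isOpen_Ici {A : Set ℝ} {x : ℝ} (hx : x ∉ A) : IsOpen[hattori A] (Ici x) := by
  intro y hy
  by_cases hyA : y ∈ A
  · have hxy : x < y := hy.lt_of_ne (by rintro rfl; exact hx hyA)
    exact ⟨y - x, by linarith, fun _ z hz => show x ≤ z by linarith [hz.1], fun h => absurd hyA h⟩
  · exact ⟨1, one_pos, fun h => absurd h hyA, fun _ z hz => hy.trans hz.1⟩

lemma hattori_isCompact_inter_Iio {A K : Set ℝ} (hK : @IsCompact ℝ (hattori A) K) {x : ℝ}
    (hx : x ∉ A) : IsCompact (K ∩ Iio x) := by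
  have hKx : @IsCompact ℝ (hattori A) (K \ Ici x) := @IsCompact.diff _ (hattori A) _ _ hK
    (hattori_isOpen_Ici hx)
  simpa [sdiff_eq, compl_Ici] using
    @IsCompact.image _ _ (hattori A) _ _ id hKx (continuous_id_of_le (hattori_le_euclidean A))

lemma hattori_nhdsWithin_inter_Iio_eq_bot {A K : Set ℝ} (hK : @IsCompact ℝ (hattori A) K) {x : ℝ}
    (hx : x ∉ A) : 𝓝[K ∩ Iio x] x = ⊥ := by
  rw [← notMem_closure_iff_nhdsWithin_eq_bot,
    (hattori_isCompact_inter_Iio hK hx).isClosed.closure_eq]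
  exact fun h => lt_irrefl x h.2

theorem stmt11 (A K : Set ℝ) (hK : @IsCompact ℝ (hattori A) K) :
    (K ∩ Aᶜ).Countable :=
  (countable_setOfPred_isolated_left_within (s := K)).mono fun _ hx =>
    (⟨hx.1, hattori_nhdsWithin_inter_Iio_eq_bot hK hx.2⟩ : _ ∧ _)
end

section
/- Let A = ℝ \ ({0} ∪ {1/n : n ∈ ℕ, n ≥ 1}). Then the Hattori space (ℝ, τ_A) is σ-compact but not locally compact. -/
open Set

/-!
Points of `A` have Euclidean neighbourhoods, so when `A` is open the identity from the Euclidean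
line is continuous on `A`, making `A` σ-compact for `τ_A`; a countable complement only adds
countably many singletons. Every `τ_A`-neighbourhood of `x` contains some `[x, x + ε)`, so if
points `b ∉ A` accumulate at `x` from the right, a compact neighbourhood of `x` would contain a
`τ_A`-closed interval `[x, b]`, which is not compact because `b` is cut off from its left.
-/

open Filter Topology

section Hattori

variable {A : Set ℝ}

theorem hattori_le : hattori A ≤ (inferInstance : TopologicalSpace ℝ) := by
  intro U hU x hx
  obtain ⟨ε, hε, hball⟩ := Metric.isOpen_iff.1 hU x hx
  rw [Real.ball_eq_Ioo] at hball
  exact ⟨ε, hε, fun _ => hball, fun _ y hy => hball ⟨by linarith [hy.1], hy.2⟩⟩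

theorem exists_Ico_subset_of_isOpen_hattori {U : Set ℝ} (hU : IsOpen[hattori A] U) {x : ℝ}
    (hx : x ∈ U) : ∃ ε > 0, Ico x (x + ε) ⊆ U := by
  obtain ⟨ε, hε, hA, hAc⟩ := hU x hx
  by_cases hxA : x ∈ A
  · exact ⟨ε, hε, fun y hy => hA hxA ⟨by linarith [hy.1], hy.2⟩⟩
  · exact ⟨ε, hε, hAc hxA⟩

theorem nhds_le_nhds_hattori {x : ℝ} (hx : x ∈ A) : 𝓝 x ≤ @nhds ℝ (hattori A) x := by
  refine (@nhds_basis_opens ℝ (hattori A) x).ge_iff.2 fun U ⟨hxU, hU⟩ => ?_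
  obtain ⟨ε, hε, hA, -⟩ := hU x hxU
  exact mem_of_superset (Ioo_mem_nhds (by linarith) (by linarith)) (hA hx)

theorem nhdsGE_le_nhds_hattori (x : ℝ) : 𝓝[≥] x ≤ @nhds ℝ (hattori A) x := by
  refine (@nhds_basis_opens ℝ (hattori A) x).ge_iff.2 fun U ⟨hxU, hU⟩ => ?_
  obtain ⟨ε, hε, hIco⟩ := exists_Ico_subset_of_isOpen_hattori hU hxU
  exact mem_of_superset (Ico_mem_nhdsGE (by linarith)) hIco

theorem continuousOn_id_hattori : @ContinuousOn ℝ ℝ _ (hattori A) id A :=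
  fun _ hx => (tendsto_id'.2 (nhds_le_nhds_hattori hx)).mono_left nhdsWithin_le_nhds

theorem sigmaCompactSpace_hattori (hA : IsOpen A) (hAc : Aᶜ.Countable) :
    @SigmaCompactSpace ℝ (hattori A) := by
  have hA_euclid : IsSigmaCompact A :=
    have := hA.locallyCompactSpace
    isSigmaCompact_iff_sigmaCompactSpace.2 inferInstance
  have hA_hattori : @IsSigmaCompact ℝ (hattori A) A := by
    simpa only [image_id] using
      @IsSigmaCompact.image_of_continuousOn ℝ ℝ _ (hattori A) _ _ hA_euclid continuousOn_id_hattori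
  have hAc_hattori : @IsSigmaCompact ℝ (hattori A) Aᶜ := by
    simpa only [biUnion_of_singleton] using @isSigmaCompact_biUnion ℝ ℝ (hattori A) _ _ hAc
      fun x _ => @IsCompact.isSigmaCompact ℝ (hattori A) _
        (@isCompact_singleton ℝ (hattori A) x)
  refine (@isSigmaCompact_univ_iff ℝ (hattori A)).1 ?_
  rw [← union_compl_self A, ← sUnion_pair]
  refine @isSigmaCompact_sUnion ℝ (hattori A) _ (toFinite _).countable ?_
  rintro ⟨s, rfl | rfl⟩
  exacts [hA_hattori, hAc_hattori]

theorem isOpen_hattori_Ici {b : ℝ} (hb : b ∉ A) : IsOpen[hattori A] (Ici b) := by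
  intro y hy
  rcases (mem_Ici.1 hy).eq_or_lt with rfl | hby
  · exact ⟨1, one_pos, fun h => absurd h hb, fun _ => Ico_subset_Ici_self⟩
  · exact ⟨y - b, by linarith, fun _ z hz => mem_Ici.2 (by linarith [hz.1]),
      fun _ z hz => hy.trans hz.1⟩

/-- `b` is approached from the left by the open sets `Iio t`, but only the Sorgenfrey
neighbourhood `Ici b` contains `b` itself. -/
theorem not_isCompact_hattori_Icc {a b : ℝ} (hab : a < b) (hb : b ∉ A) :
    ¬ @IsCompact ℝ (hattori A) (Icc a b) := by
  intro hK
  have : Nonempty (Ico a b) := ⟨⟨a, le_rfl, hab⟩⟩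
  have hcover : Icc a b ⊆ ⋃ t : Ico a b, Iio (t : ℝ) ∪ Ici b := by
    intro y hy
    rcases eq_or_lt_of_le hy.2 with rfl | hyb
    · exact mem_iUnion.2 ⟨⟨a, le_rfl, hab⟩, Or.inr (mem_Ici.2 le_rfl)⟩
    · exact mem_iUnion.2 ⟨⟨(y + b) / 2, by linarith [hy.1], by linarith⟩,
        Or.inl (show y < (y + b) / 2 by linarith)⟩
  have hmono : Monotone fun t : Ico a b => Iio (t : ℝ) ∪ Ici b :=
    fun s t hst => union_subset_union_left _ (Iio_subset_Iio hst)
  obtain ⟨⟨t, hat, htb⟩, ht⟩ := @IsCompact.elim_directed_cover ℝ (hattori A) _ _ _ hK _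
    (fun _ => @IsOpen.union ℝ _ _ (hattori A) (isOpen_Iio.mono hattori_le)
      (isOpen_hattori_Ici hb)) hcover hmono.directed_le
  rcases ht ⟨hat, htb.le⟩ with h | h
  exacts [lt_irrefl t h, htb.not_ge h]

theorem not_weaklyLocallyCompactSpace_hattori {x : ℝ} (hx : ∀ u > x, ∃ b ∈ Ioo x u, b ∉ A) :
    ¬ @WeaklyLocallyCompactSpace ℝ (hattori A) := by
  intro h
  obtain ⟨K, hK, hKx⟩ := @WeaklyLocallyCompactSpace.exists_compact_mem_nhds ℝ (hattori A) h x
  obtain ⟨u, hxu, hu⟩ := mem_nhdsGE_iff_exists_Ico_subset.1 (nhdsGE_le_nhds_hattori x hKx)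
  obtain ⟨b, ⟨hxb, hbu⟩, hb⟩ := hx u hxu
  exact not_isCompact_hattori_Icc hxb hb
    (@IsCompact.of_isClosed_subset ℝ (hattori A) _ _ hK (isClosed_Icc.mono hattori_le)
      ((Icc_subset_Ico_right hbu).trans hu))

end Hattori

def reciprocalsWithZero : Set ℝ := {0} ∪ {x : ℝ | ∃ n : ℕ, 1 ≤ n ∧ x = 1 / (n : ℝ)}

theorem reciprocalsWithZero_eq :
    reciprocalsWithZero = insert 0 (range fun n : ℕ => 1 / ((n : ℝ) + 1)) := by
  ext x
  simp only [reciprocalsWithZero, singleton_union, mem_insert_iff, mem_ofPred_eq, mem_range]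
  refine or_congr_right ⟨?_, ?_⟩
  · rintro ⟨n, hn, rfl⟩
    obtain ⟨m, rfl⟩ := Nat.exists_eq_add_of_le' hn
    exact ⟨m, by push_cast; rfl⟩
  · rintro ⟨m, rfl⟩
    exact ⟨m + 1, by omega, by push_cast; rfl⟩

theorem isCompact_reciprocalsWithZero : IsCompact reciprocalsWithZero :=
  reciprocalsWithZero_eq ▸ tendsto_one_div_add_atTop_nhds_zero_nat.isCompact_insert_range

theorem countable_reciprocalsWithZero : reciprocalsWithZero.Countable :=
  reciprocalsWithZero_eq ▸ (countable_range _).insert 0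

theorem exists_mem_reciprocalsWithZero_Ioo {u : ℝ} (hu : 0 < u) :
    ∃ b ∈ Ioo 0 u, b ∈ reciprocalsWithZero := by
  obtain ⟨n, hn⟩ := exists_nat_one_div_lt hu
  exact ⟨_, ⟨by positivity, hn⟩, reciprocalsWithZero_eq ▸ mem_insert_of_mem _ ⟨n, rfl⟩⟩

theorem stmt15 :
    @SigmaCompactSpace ℝ
        (hattori ({0} ∪ {x : ℝ | ∃ n : ℕ, 1 ≤ n ∧ x = 1 / (n : ℝ)})ᶜ) ∧
      ¬ @WeaklyLocallyCompactSpace ℝ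
        (hattori ({0} ∪ {x : ℝ | ∃ n : ℕ, 1 ≤ n ∧ x = 1 / (n : ℝ)})ᶜ) :=
  ⟨sigmaCompactSpace_hattori (A := reciprocalsWithZeroᶜ)
      isCompact_reciprocalsWithZero.isClosed.isOpen_compl
      (by simpa using countable_reciprocalsWithZero),
    not_weaklyLocallyCompactSpace_hattori (A := reciprocalsWithZeroᶜ) (x := 0)
      fun _ hu => by simpa using exists_mem_reciprocalsWithZero_Ioo hu⟩
end

section
/- For any subset A of ℝ, the Hattori space (ℝ, τ_A) is metrizable if and only if ℝ\A is countable. -/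
open Set Topology TopologicalSpace

lemma hattori_isOpen_Ioo (A : Set ℝ) (a b : ℝ) : IsOpen[hattori A] (Ioo a b) := by
  intro x hx
  obtain ⟨h1, h2⟩ := hx
  refine ⟨min (x - a) (b - x), lt_min (by linarith) (by linarith), fun _ y hy => ?_,
    fun _ y hy => ?_⟩
  · have := min_le_left (x - a) (b - x); have := min_le_right (x - a) (b - x)
    exact ⟨by linarith [hy.1], by linarith [hy.2]⟩
  · have := min_le_right (x - a) (b - x)
    exact ⟨by linarith [hy.1], by linarith [hy.2]⟩

lemma hattori_isOpen_Ico (A : Set ℝ) {a : ℝ} (ha : a ∉ A) (b : ℝ) :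
    IsOpen[hattori A] (Ico a b) := by
  intro x hx
  obtain ⟨h1, h2⟩ := hx
  by_cases hxA : x ∈ A
  · have hax : a < x := lt_of_le_of_ne h1 (by rintro rfl; exact ha hxA)
    refine ⟨min (x - a) (b - x), lt_min (by linarith) (by linarith), fun _ y hy => ?_,
      fun h => (h hxA).elim⟩
    have := min_le_left (x - a) (b - x); have := min_le_right (x - a) (b - x)
    exact ⟨by linarith [hy.1], by linarith [hy.2]⟩
  · refine ⟨b - x, by linarith, fun h => (hxA h).elim, fun _ y hy => ?_⟩
    exact ⟨le_trans h1 hy.1, by linarith [hy.2]⟩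

lemma hattori_isClosed_Icc (A : Set ℝ) (a b : ℝ) : IsClosed[hattori A] (Icc a b) := by
  refine (@isOpen_compl_iff ℝ (Icc a b) (hattori A)).mp ?_
  intro x hx
  rw [mem_compl_iff, mem_Icc, not_and_or, not_le, not_le] at hx
  rcases hx with hx | hx
  · refine ⟨a - x, by linarith, fun _ y hy => ?_, fun _ y hy => ?_⟩
    · simp only [mem_compl_iff, mem_Icc, not_and_or, not_le]
      exact Or.inl (by linarith [hy.2])
    · simp only [mem_compl_iff, mem_Icc, not_and_or, not_le]
      exact Or.inl (by linarith [hy.2])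
  · refine ⟨x - b, by linarith, fun _ y hy => ?_, fun _ y hy => ?_⟩
    · simp only [mem_compl_iff, mem_Icc, not_and_or, not_le]
      exact Or.inr (by linarith [hy.1])
    · simp only [mem_compl_iff, mem_Icc, not_and_or, not_le]
      exact Or.inr (by linarith [hy.1])

theorem stmt19 (A : Set ℝ) :
    @TopologicalSpace.MetrizableSpace ℝ (hattori A) ↔ Aᶜ.Countable := by
  letI t := hattori A
  constructor
  · intro h
    -- ℚ is dense, so separable
    haveI : SeparableSpace ℝ := by
      refine ⟨⟨Set.range ((↑) : ℚ → ℝ), countable_range _, dense_iff_inter_open.2 ?_⟩⟩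
      rintro U hU ⟨x, hx⟩
      obtain ⟨ε, hε, h1, h2⟩ := hU x hx
      obtain ⟨q, hq1, hq2⟩ := exists_rat_btwn (by linarith : x < x + ε)
      refine ⟨(q : ℝ), ?_, ⟨q, rfl⟩⟩
      by_cases hxA : x ∈ A
      · exact h1 hxA ⟨by linarith, hq2⟩
      · exact h2 hxA ⟨le_of_lt hq1, hq2⟩
    letI m : MetricSpace ℝ := TopologicalSpace.metrizableSpaceMetric ℝ
    letI : PseudoMetricSpace ℝ := m.toPseudoMetricSpace
    haveI : SecondCountableTopology ℝ := UniformSpace.secondCountable_of_separable ℝ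
    -- inject Aᶜ into the countable basis
    have hb := isBasis_countableBasis ℝ
    have key : ∀ x ∈ Aᶜ, ∃ v ∈ countableBasis ℝ, x ∈ v ∧ v ⊆ Ico x (x + 1) := by
      intro x hx
      exact hb.exists_subset_of_mem_open ⟨le_refl x, by linarith⟩
        (hattori_isOpen_Ico A hx (x + 1))
    choose! f hf1 hf2 hf3 using key
    have : MapsTo f Aᶜ (countableBasis ℝ) := fun x hx => hf1 x hx
    refine this.countable_of_injOn (fun x hx y hy hxy => ?_) (countable_countableBasis ℝ)
    have h1 : x ∈ Ico y (y + 1) := hf3 y hy (hxy ▸ hf2 x hx)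
    have h2 : y ∈ Ico x (x + 1) := hf3 x hx (hxy ▸ hf2 y hy)
    exact le_antisymm h2.1 h1.1
  · intro hc
    haveI : T1Space ℝ := by
      refine ⟨fun x => ?_⟩
      rw [← Icc_self]
      exact hattori_isClosed_Icc A x x
    haveI : RegularSpace ℝ := by
      refine RegularSpace.of_exists_mem_nhds_isClosed_subset fun x s hs => ?_
      obtain ⟨U, hUs, hU, hxU⟩ := mem_nhds_iff.1 hs
      obtain ⟨ε, hε, h1, h2⟩ := hU x hxU
      by_cases hxA : x ∈ A
      · refine ⟨Icc (x - ε/2) (x + ε/2), ?_, hattori_isClosed_Icc A _ _, ?_⟩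
        · exact mem_nhds_iff.2 ⟨Ioo (x - ε/2) (x + ε/2), Ioo_subset_Icc_self,
            hattori_isOpen_Ioo A _ _, by constructor <;> linarith⟩
        · refine subset_trans (fun y hy => ?_) hUs
          exact h1 hxA ⟨by linarith [hy.1], by linarith [hy.2]⟩
      · refine ⟨Icc x (x + ε/2), ?_, hattori_isClosed_Icc A _ _, ?_⟩
        · exact mem_nhds_iff.2 ⟨Ico x (x + ε/2), Ico_subset_Icc_self,
            hattori_isOpen_Ico A hxA _, by constructor <;> linarith⟩
        · refine subset_trans (fun y hy => ?_) hUs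
          exact h2 hxA ⟨hy.1, by linarith [hy.2]⟩
    haveI : SecondCountableTopology ℝ := by
      set B : Set (Set ℝ) := ((fun p : ℚ × ℚ => Ioo (p.1 : ℝ) (p.2 : ℝ)) '' univ) ∪
          ((fun p : ℝ × ℚ => Ico p.1 (p.2 : ℝ)) '' (Aᶜ ×ˢ (univ : Set ℚ))) with hB
      refine IsTopologicalBasis.secondCountableTopology
        (isTopologicalBasis_of_isOpen_of_nhds (s := B) ?_ ?_) ?_
      · rintro u (⟨⟨p, q⟩, -, rfl⟩ | ⟨⟨a, q⟩, ⟨ha, -⟩, rfl⟩)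
        · exact hattori_isOpen_Ioo A _ _
        · exact hattori_isOpen_Ico A ha _
      · intro x u hxu hu
        obtain ⟨ε, hε, h1, h2⟩ := hu x hxu
        by_cases hxA : x ∈ A
        · obtain ⟨p, hp1, hp2⟩ := exists_rat_btwn (by linarith : x - ε < x)
          obtain ⟨q, hq1, hq2⟩ := exists_rat_btwn (by linarith : x < x + ε)
          refine ⟨Ioo (p : ℝ) q, Or.inl ⟨⟨p, q⟩, mem_univ _, rfl⟩, ⟨hp2, hq1⟩, ?_⟩
          exact fun y hy => h1 hxA ⟨by linarith [hy.1], by linarith [hy.2]⟩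
        · obtain ⟨q, hq1, hq2⟩ := exists_rat_btwn (by linarith : x < x + ε)
          refine ⟨Ico x q, Or.inr ⟨⟨x, q⟩, ⟨hxA, mem_univ _⟩, rfl⟩, ⟨le_refl x, hq1⟩, ?_⟩
          exact fun y hy => h2 hxA ⟨hy.1, by linarith [hy.2]⟩
      · exact (countable_univ.image _).union ((hc.prod countable_univ).image _)
    exact metrizableSpace_of_t3_secondCountable ℝ
end
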